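/- Let τ_n be as follows: with probability 1/n, τ_n is a sum of 2n i.i.d. Exp(1) variables, and with probability 1 − 1/n it is a sum of (n+1) i.i.d. Exp(1) variables; let τ_n^{(1)},…,τ_n^{(n)} be n independent copies and T_n = max_i τ_n^{(i)}. Then for fixed s: lim_{n→∞} P(T_n > ns) = 1 if s < 1, = 1 − e^{−1} if 1 < s < 2, and = 0 if s > 2. -/

import Mathlib

/-!
With `p n` the probability that one copy exceeds `n * s`, the maximum exceeds `n * s` with
probability `1 - (1 - p n) ^ n`, which tends to `1`, `1 - exp (-1)`, `0` according as `n * p n`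
tends to `∞`, `1`, `0`. Now `n * p n = P(Γ(2n) > ns) + (n - 1) P(Γ(n+1) > ns)`, and a Chernoff
bound, obtained by comparing the `Gamma(a, 1)` density with the tilted `Gamma(a, 1 + l)` one,
makes `P(Γ(cn + k) ≤ ns)` exponentially small when `s < c` and `P(Γ(cn + k) > ns)` exponentially
small when `s > c`.
-/

open MeasureTheory ProbabilityTheory Filter

/-- The law of the hitting time `τ_n`: with probability `1/n` a `Gamma(2n,1)`
distribution and with probability `1 - 1/n` a `Gamma(n+1,1)` distribution. -/
noncomputable def mixtureLaw (n : ℕ) : Measure ℝ :=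
  (ENNReal.ofReal (1 / n)) • gammaMeasure (2 * n) 1 +
    (ENNReal.ofReal (1 - 1 / n)) • gammaMeasure (n + 1) 1

open Real Set Topology

lemma tendsto_zero_of_tendsto_natCast_mul {f : ℕ → ℝ}
    (h : Tendsto (fun n : ℕ => n * f n) atTop (𝓝 0)) : Tendsto f atTop (𝓝 0) := by
  have := h.mul tendsto_inv_atTop_nhds_zero_nat
  rw [mul_zero] at this
  refine this.congr' ?_
  filter_upwards [eventually_ne_atTop 0] with n hn
  field_simp

lemma tendsto_one_sub_pow_of_tendsto_atTop {p : ℕ → ℝ} (hp : ∀ n, p n ≤ 1)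
    (h : Tendsto (fun n : ℕ => n * p n) atTop atTop) :
    Tendsto (fun n => (1 - p n) ^ n) atTop (𝓝 0) := by
  have hexp : Tendsto (fun n : ℕ => exp (-(n * p n))) atTop (𝓝 0) :=
    tendsto_exp_atBot.comp (tendsto_neg_atTop_atBot.comp h)
  refine squeeze_zero (fun n => pow_nonneg (by linarith [hp n]) n) (fun n => ?_) hexp
  calc (1 - p n) ^ n ≤ exp (-p n) ^ n := by
        gcongr
        · linarith [hp n]
        · linarith [add_one_le_exp (-p n)]
    _ = exp (-(n * p n)) := by rw [← exp_nat_mul]; ring_nf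

lemma tendsto_one_sub_pow_of_tendsto {p : ℕ → ℝ} {c : ℝ}
    (h : Tendsto (fun n : ℕ => n * p n) atTop (𝓝 c)) :
    Tendsto (fun n => (1 - p n) ^ n) atTop (𝓝 (exp (-c))) := by
  have h' : Tendsto (fun n : ℕ => n * -p n) atTop (𝓝 (-c)) := by simpa only [mul_neg] using h.neg
  simpa only [← sub_eq_add_neg] using Real.tendsto_one_add_pow_exp_of_tendsto h'

lemma setOf_lt_ciSup_eq_compl_iInter {Ω ι : Type*} [Finite ι] [Nonempty ι] (f : ι → Ω → ℝ)
    (c : ℝ) :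
    {ω | c < ⨆ i, f i ω} = (⋂ i, f i ⁻¹' Iic c)ᶜ := by
  ext ω
  simp [lt_ciSup_iff (Finite.bddAbove_range _)]

theorem measureReal_lt_iSup_of_iIndepFun {Ω ι : Type*} [MeasurableSpace Ω] {μ : Measure Ω}
    [IsProbabilityMeasure μ] [Fintype ι] [Nonempty ι] {f : ι → Ω → ℝ} (hindep : iIndepFun f μ)
    {ν : Measure ℝ} [IsProbabilityMeasure ν] (hlaw : ∀ i, μ.map (f i) = ν) (c : ℝ) :
    μ.real {ω | c < ⨆ i, f i ω} = 1 - ν.real (Iic c) ^ Fintype.card ι := by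
  have hmeas i : AEMeasurable (f i) μ :=
    .of_map_ne_zero (by rw [hlaw i]; exact IsProbabilityMeasure.ne_zero ν)
  have hpre i : μ (f i ⁻¹' Iic c) = ν (Iic c) := by
    rw [← hlaw i, Measure.map_apply_of_aemeasurable (hmeas i) measurableSet_Iic]
  have hinter : μ (⋂ i, f i ⁻¹' Iic c) = ν (Iic c) ^ Fintype.card ι := by
    rw [hindep.meas_iInter fun i => ⟨Iic c, measurableSet_Iic, rfl⟩]
    simp [hpre]
  rw [setOf_lt_ciSup_eq_compl_iInter, probReal_compl_eq_one_sub₀ (.iInter fun i =>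
      (hmeas i).nullMeasurableSet_preimage measurableSet_Iic), measureReal_def, hinter,
    ENNReal.toReal_pow, measureReal_def]

lemma gammaMeasure_real_Ioi {a : ℝ} (ha : 0 < a) (t : ℝ) :
    (gammaMeasure a 1).real (Ioi t) = 1 - (gammaMeasure a 1).real (Iic t) := by
  have := isProbabilityMeasure_gammaMeasure ha one_pos
  rw [← compl_Iic, probReal_compl_eq_one_sub measurableSet_Iic]

lemma gammaPDFReal_one_eq_exp_mul {a l x : ℝ} (hl : -1 < l) :
    gammaPDFReal a 1 x = exp (l * x - a * log (1 + l)) * gammaPDFReal a (1 + l) x := by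
  have hb : 0 < 1 + l := by linarith
  unfold gammaPDFReal
  split_ifs
  · rw [one_rpow, rpow_def_of_pos hb]
    have : exp (-(1 * x)) = exp (l * x - a * log (1 + l)) * exp (log (1 + l) * a) *
        exp (-((1 + l) * x)) := by
      rw [← exp_add, ← exp_add]; ring_nf
    rw [this]; ring
  · simp

theorem gammaMeasure_le_of_tilt {a l t : ℝ} (ha : 0 < a) (hl : -1 < l) {S : Set ℝ}
    (hS : MeasurableSet S) (hSt : ∀ x ∈ S, l * x ≤ l * t) :
    gammaMeasure a 1 S ≤ ENNReal.ofReal (exp (l * t - a * log (1 + l))) := by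
  set K := exp (l * t - a * log (1 + l))
  have hdens : ∀ x ∈ S, gammaPDF a 1 x ≤ ENNReal.ofReal K * gammaPDF a (1 + l) x := by
    intro x hx
    rw [gammaPDF, gammaPDF, ← ENNReal.ofReal_mul (exp_pos _).le, gammaPDFReal_one_eq_exp_mul hl]
    refine ENNReal.ofReal_le_ofReal (mul_le_mul_of_nonneg_right ?_
      (gammaPDFReal_nonneg ha (by linarith) x))
    exact exp_le_exp.mpr (by linarith [hSt x hx])
  have hmeas : Measurable (gammaPDF a (1 + l)) := (measurable_gammaPDFReal a _).ennreal_ofReal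
  calc gammaMeasure a 1 S = ∫⁻ x in S, gammaPDF a 1 x := by
        rw [gammaMeasure, withDensity_apply _ hS]
    _ ≤ ∫⁻ x in S, ENNReal.ofReal K * gammaPDF a (1 + l) x :=
        setLIntegral_mono (hmeas.const_mul _) hdens
    _ ≤ ENNReal.ofReal K * ∫⁻ x, gammaPDF a (1 + l) x := by
        rw [lintegral_const_mul _ hmeas]; gcongr; exact Measure.restrict_le_self
    _ = ENNReal.ofReal K := by rw [lintegral_gammaPDF_eq_one ha (by linarith), mul_one]

theorem tendsto_natCast_mul_gammaMeasure_of_tilt {c k l s : ℝ} (hc : 0 < c) (hk : 0 ≤ k)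
    (hl : -1 < l) (hrate : l * s < c * log (1 + l)) {S : ℕ → Set ℝ}
    (hS : ∀ n, MeasurableSet (S n)) (hSt : ∀ n : ℕ, ∀ x ∈ S n, l * x ≤ l * (n * s)) :
    Tendsto (fun n : ℕ => n * (gammaMeasure (c * n + k) 1).real (S n)) atTop (𝓝 0) := by
  set ρ := exp (l * s - c * log (1 + l))
  have hρ : ρ < 1 := exp_lt_one_iff.mpr (by linarith)
  have hbound : ∀ n : ℕ, 1 ≤ n →
      (gammaMeasure (c * n + k) 1).real (S n) ≤ exp (-(k * log (1 + l))) * ρ ^ n := by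
    intro n hn
    have ha : 0 < c * n + k := by
      have : (1 : ℝ) ≤ n := by exact_mod_cast hn
      nlinarith
    have hexp : exp (l * (n * s) - (c * n + k) * log (1 + l)) =
        exp (-(k * log (1 + l))) * ρ ^ n := by
      rw [← exp_nat_mul, ← exp_add]; ring_nf
    rw [measureReal_def, ← hexp, ← ENNReal.toReal_ofReal (exp_pos _).le]
    exact ENNReal.toReal_mono ENNReal.ofReal_ne_top
      (gammaMeasure_le_of_tilt ha hl (hS n) (hSt n))
  have hlim := (tendsto_self_mul_const_pow_of_lt_one (exp_pos _).le hρ).const_mul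
    (exp (-(k * log (1 + l))))
  rw [mul_zero] at hlim
  refine squeeze_zero' (Eventually.of_forall fun n => by positivity) ?_ hlim
  filter_upwards [eventually_ge_atTop 1] with n hn
  calc (n : ℝ) * (gammaMeasure (c * n + k) 1).real (S n)
      ≤ n * (exp (-(k * log (1 + l))) * ρ ^ n) := by gcongr; exact hbound n hn
    _ = _ := by ring

lemma mul_lt_mul_log_one_add {c l s : ℝ} (hc : 0 ≤ c) (hl : -1 < l)
    (h : 0 < l * (c - s * (1 + l))) : l * s < c * log (1 + l) := by
  have hb : 0 < 1 + l := by linarith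
  have hlog : 1 - (1 + l)⁻¹ ≤ log (1 + l) := one_sub_inv_le_log_of_pos hb
  have hgap : c * (1 - (1 + l)⁻¹) - l * s = l * (c - s * (1 + l)) / (1 + l) := by
    field_simp; ring
  have : 0 < l * (c - s * (1 + l)) / (1 + l) := div_pos h hb
  nlinarith

theorem tendsto_natCast_mul_gammaMeasure_Iic {c k s : ℝ} (hc : 0 < c) (hk : 0 ≤ k)
    (hs : s < c) :
    Tendsto (fun n : ℕ => n * (gammaMeasure (c * n + k) 1).real (Iic (n * s))) atTop (𝓝 0) := by
  set l := (c - s) / (2 * c) with hl_def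
  have hl : 0 < l := div_pos (by linarith) (by linarith)
  have hgap : c - s * (1 + l) = (c - s) * (2 * c - s) / (2 * c) := by
    rw [hl_def]; field_simp; ring
  refine tendsto_natCast_mul_gammaMeasure_of_tilt hc hk (by linarith)
    (mul_lt_mul_log_one_add hc.le (by linarith) ?_) (fun _ => measurableSet_Iic)
    fun n x hx => mul_le_mul_of_nonneg_left hx hl.le
  rw [hgap]
  exact mul_pos hl (div_pos (mul_pos (by linarith) (by linarith)) (by linarith))

theorem tendsto_natCast_mul_gammaMeasure_Ioi {c k s : ℝ} (hc : 0 < c) (hk : 0 ≤ k)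
    (hs : c < s) :
    Tendsto (fun n : ℕ => n * (gammaMeasure (c * n + k) 1).real (Ioi (n * s))) atTop (𝓝 0) := by
  set l := (c - s) / (2 * s) with hl_def
  have hs0 : 0 < s := by linarith
  have hl : l < 0 := div_neg_of_neg_of_pos (by linarith) (by linarith)
  have hl1 : -1 < l := by rw [lt_div_iff₀ (by linarith)]; linarith
  have hgap : l * (c - s * (1 + l)) = (s - c) ^ 2 / (4 * s) := by
    rw [hl_def]; field_simp; ring
  refine tendsto_natCast_mul_gammaMeasure_of_tilt hc hk hl1
    (mul_lt_mul_log_one_add hc.le hl1 ?_) (fun _ => measurableSet_Ioi)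
    fun n x hx => mul_le_mul_of_nonpos_left (le_of_lt hx) hl.le
  rw [hgap]
  exact div_pos (pow_pos (by linarith) 2) (by linarith)

lemma tendsto_natCast_sub_one_mul_gammaMeasure_Ioi {s : ℝ} (hs : 1 < s) :
    Tendsto (fun n : ℕ => (n - 1) * (gammaMeasure (n + 1) 1).real (Ioi (n * s))) atTop
      (𝓝 0) := by
  have h := tendsto_natCast_mul_gammaMeasure_Ioi one_pos zero_le_one hs
  simp only [one_mul] at h
  simpa only [sub_mul, one_mul, sub_zero] using h.sub (tendsto_zero_of_tendsto_natCast_mul h)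

instance isProbabilityMeasure_mixtureLaw (n : ℕ) :
    IsProbabilityMeasure (mixtureLaw n) := by
  constructor
  rw [mixtureLaw, Measure.add_apply, Measure.smul_apply, Measure.smul_apply, smul_eq_mul,
    smul_eq_mul]
  rcases n.eq_zero_or_pos with rfl | hn
  -- `mixtureLaw 0` is `Gamma(1, 1)`, since `1 / 0 = 0`.
  · have := isProbabilityMeasure_gammaMeasure one_pos one_pos
    simp
  · have hn' : (1 : ℝ) ≤ n := by exact_mod_cast hn
    have := isProbabilityMeasure_gammaMeasure (a := 2 * n) (by positivity) one_pos
    have := isProbabilityMeasure_gammaMeasure (a := n + 1) (by positivity) one_pos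
    have hinv : 1 / (n : ℝ) ≤ 1 := by rw [div_le_one (by positivity)]; exact hn'
    rw [measure_univ, measure_univ, mul_one, mul_one,
      ← ENNReal.ofReal_add (by positivity) (by linarith), add_sub_cancel, ENNReal.ofReal_one]

lemma natCast_mul_mixtureLaw_real {n : ℕ} (hn : n ≠ 0) (S : Set ℝ) :
    n * (mixtureLaw n).real S =
      (gammaMeasure (2 * n) 1).real S + (n - 1) * (gammaMeasure (n + 1) 1).real S := by
  have hn' : (1 : ℝ) ≤ n := by exact_mod_cast Nat.one_le_iff_ne_zero.mpr hn
  have := isProbabilityMeasure_gammaMeasure (a := 2 * n) (by positivity) one_pos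
  have := isProbabilityMeasure_gammaMeasure (a := n + 1) (by positivity) one_pos
  have hinv : 1 / (n : ℝ) ≤ 1 := by rw [div_le_one (by positivity)]; exact hn'
  rw [mixtureLaw, measureReal_def, Measure.add_apply, Measure.smul_apply, Measure.smul_apply,
    smul_eq_mul, smul_eq_mul, ENNReal.toReal_add (by finiteness) (by finiteness),
    ENNReal.toReal_mul, ENNReal.toReal_mul, ENNReal.toReal_ofReal (by positivity),
    ENNReal.toReal_ofReal (by linarith), ← measureReal_def, ← measureReal_def]
  field_simp

section MixtureTail

variable {s : ℝ}

theorem tendsto_natCast_mul_mixtureLaw_Ioi_of_lt_one (hs : s < 1) :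
    Tendsto (fun n : ℕ => n * (mixtureLaw n).real (Ioi (n * s))) atTop atTop := by
  have hG := tendsto_zero_of_tendsto_natCast_mul
    (tendsto_natCast_mul_gammaMeasure_Iic one_pos zero_le_one hs)
  simp only [one_mul] at hG
  have hlower : Tendsto (fun n : ℕ => (n - 1) * (gammaMeasure (n + 1) 1).real (Ioi (n * s)))
      atTop atTop := by
    simp_rw [gammaMeasure_real_Ioi (Nat.cast_add_one_pos _)]
    refine (tendsto_atTop_add_const_right _ (-1) tendsto_natCast_atTop_atTop).atTop_mul_pos
      one_pos ?_
    simpa using tendsto_const_nhds.sub hG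
  refine tendsto_atTop_mono' _ ?_ hlower
  filter_upwards [eventually_ne_atTop 0] with n hn
  rw [natCast_mul_mixtureLaw_real hn]
  linarith [measureReal_nonneg (μ := gammaMeasure (2 * n) 1) (s := Ioi (n * s))]

theorem tendsto_natCast_mul_mixtureLaw_Ioi_of_one_lt_of_lt_two (hs₁ : 1 < s) (hs₂ : s < 2) :
    Tendsto (fun n : ℕ => n * (mixtureLaw n).real (Ioi (n * s))) atTop (𝓝 1) := by
  have hG := tendsto_zero_of_tendsto_natCast_mul
    (tendsto_natCast_mul_gammaMeasure_Iic two_pos le_rfl hs₂)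
  simp only [add_zero] at hG
  have hbar : Tendsto (fun n : ℕ => (gammaMeasure (2 * n) 1).real (Ioi (n * s))) atTop (𝓝 1) := by
    have h := (tendsto_const_nhds (x := (1 : ℝ))).sub hG
    rw [sub_zero] at h
    refine h.congr' ?_
    filter_upwards [eventually_ne_atTop 0] with n hn
    rw [gammaMeasure_real_Ioi (mul_pos two_pos (Nat.cast_pos.mpr (Nat.pos_of_ne_zero hn)))]
  have h := hbar.add (tendsto_natCast_sub_one_mul_gammaMeasure_Ioi hs₁)
  rw [add_zero] at h
  refine h.congr' ?_
  filter_upwards [eventually_ne_atTop 0] with n hn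
  exact (natCast_mul_mixtureLaw_real hn _).symm

theorem tendsto_natCast_mul_mixtureLaw_Ioi_of_two_lt (hs : 2 < s) :
    Tendsto (fun n : ℕ => n * (mixtureLaw n).real (Ioi (n * s))) atTop (𝓝 0) := by
  have hbar := tendsto_zero_of_tendsto_natCast_mul
    (tendsto_natCast_mul_gammaMeasure_Ioi two_pos le_rfl hs)
  simp only [add_zero] at hbar
  have h := hbar.add (tendsto_natCast_sub_one_mul_gammaMeasure_Ioi (by linarith : 1 < s))
  rw [add_zero] at h
  refine h.congr' ?_
  filter_upwards [eventually_ne_atTop 0] with n hn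
  exact (natCast_mul_mixtureLaw_real hn _).symm

end MixtureTail

theorem max_mixture_tail_asymptotics_general
    {α : Type*} [MeasurableSpace α] (μ : Measure α) [IsProbabilityMeasure μ]
    (τ : (n : ℕ) → Fin n → α → ℝ)
    (hindep : ∀ n : ℕ, iIndepFun (τ n) μ)
    (hlaw : ∀ n : ℕ, ∀ i : Fin n, μ.map (τ n i) = mixtureLaw n)
    (T : (n : ℕ) → α → ℝ) (hT : ∀ n ω, T n ω = ⨆ i : Fin n, τ n i ω) (s : ℝ) :
    (s < 1 → Tendsto (fun n : ℕ =>
        (μ {ω | (n : ℝ) * s < T n ω}).toReal) atTop (nhds 1)) ∧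
    (1 < s → s < 2 → Tendsto (fun n : ℕ =>
        (μ {ω | (n : ℝ) * s < T n ω}).toReal) atTop (nhds (1 - Real.exp (-1)))) ∧
    (2 < s → Tendsto (fun n : ℕ =>
        (μ {ω | (n : ℝ) * s < T n ω}).toReal) atTop (nhds 0)) := by
  set p : ℕ → ℝ := fun n => (mixtureLaw n).real (Ioi (n * s))
  have hP : (fun n : ℕ => 1 - (1 - p n) ^ n) =ᶠ[atTop]
      fun n => (μ {ω | (n : ℝ) * s < T n ω}).toReal := by
    filter_upwards [eventually_ne_atTop 0] with n hn
    have : Nonempty (Fin n) := Fin.pos_iff_nonempty.mp (Nat.pos_of_ne_zero hn)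
    simp_rw [hT, ← measureReal_def, measureReal_lt_iSup_of_iIndepFun (hindep n) (hlaw n),
      Fintype.card_fin, p, ← compl_Iic, probReal_compl_eq_one_sub measurableSet_Iic, sub_sub_cancel]
  refine ⟨fun hs => ?_, fun hs₁ hs₂ => ?_, fun hs => ?_⟩
  · simpa using (tendsto_const_nhds.sub (tendsto_one_sub_pow_of_tendsto_atTop
      (fun _ => measureReal_le_one) (tendsto_natCast_mul_mixtureLaw_Ioi_of_lt_one hs))).congr' hP
  · exact (tendsto_const_nhds.sub (tendsto_one_sub_pow_of_tendsto
      (tendsto_natCast_mul_mixtureLaw_Ioi_of_one_lt_of_lt_two hs₁ hs₂))).congr' hP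
  · simpa using (tendsto_const_nhds.sub (tendsto_one_sub_pow_of_tendsto
      (tendsto_natCast_mul_mixtureLaw_Ioi_of_two_lt hs))).congr' hP

theorem max_mixture_tail_asymptotics
    {α : Type*} [MeasurableSpace α] (μ : Measure α) [IsProbabilityMeasure μ]
    (τ : (n : ℕ) → Fin n → α → ℝ) (hmeas : ∀ n i, Measurable (τ n i))
    (hindep : ∀ n : ℕ, iIndepFun (τ n) μ)
    (hlaw : ∀ n : ℕ, ∀ i : Fin n, μ.map (τ n i) = mixtureLaw n)
    (T : (n : ℕ) → α → ℝ) (hT : ∀ n ω, T n ω = ⨆ i : Fin n, τ n i ω) (s : ℝ) :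
    (s < 1 → Tendsto (fun n : ℕ =>
        (μ {ω | (n : ℝ) * s < T n ω}).toReal) atTop (nhds 1)) ∧
    (1 < s → s < 2 → Tendsto (fun n : ℕ =>
        (μ {ω | (n : ℝ) * s < T n ω}).toReal) atTop (nhds (1 - Real.exp (-1)))) ∧
    (2 < s → Tendsto (fun n : ℕ =>
        (μ {ω | (n : ℝ) * s < T n ω}).toReal) atTop (nhds 0)) :=
  max_mixture_tail_asymptotics_general μ τ hindep hlaw T hT s
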